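/- Let H be a reduced, commutative, cancellative, atomic monoid. Then c_adj(H) ≤ sup{|y| : (x,y) ∈ A(∼_{H,mon}), |x| < |y|, the lengths |x| and |y| are adjacent elements of L(π(x)), and there is no monotone R-chain from x to y}. -/

import Mathlib

/-!
Let `k < l` be adjacent lengths of `a` and choose `z ∈ Z_k(a)`, `z' ∈ Z_l(a)` at minimal
distance. Cancelling `g = gcd(z, z')` gives `x = z / g`, `y = z' / g` with `d(z, z') = |y|`, and
`(x, y)` is again a closest pair for `π(x)`, of adjacent lengths. It is an atom of `∼_{H,mon}`:
a splitting `(x, y) = q + r` produces the factorization `q₂ r₁` of `π(x)`, whose length lies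
between `|x|` and `|y|`, and which is closer than `|y|` to `x` or to `y`. A monotone `R`-chain from
`x` to `y` would contain a step between lengths `|x|` and `|y|` sharing an atom, hence of
distance `< |y|`.
-/

namespace CMR

variable {α : Type*} [CancelCommMonoid α]

/-- The factorization monoid `Z(H)`: the free abelian monoid over the set of atoms of `H`,
modeled as multisets of atoms. -/
abbrev Fac (α : Type*) [CancelCommMonoid α] : Type _ := Multiset {u : α // Irreducible u}

/-- The factorization homomorphism `π : Z(H) → H`. -/
def piF (z : Fac α) : α := (z.map Subtype.val).prod

/-- `Z a`: the set of factorizations of `a`. -/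
def Z (a : α) : Set (Fac α) := {z | piF z = a}

/-- `L a`: the set of lengths of `a`. -/
def L (a : α) : Set ℕ := {n | ∃ z ∈ Z a, Multiset.card z = n}

/-- `Zk a k`: the factorizations of `a` of length `k`. -/
def Zk (a : α) (k : ℕ) : Set (Fac α) := {z ∈ Z a | Multiset.card z = k}

/-- `ZM a M`: the factorizations of `a` whose length lies in `M`. -/
def ZM (a : α) (M : Set ℕ) : Set (Fac α) := {z ∈ Z a | Multiset.card z ∈ M}

/-- The distance between two factorizations:
`d(z,z') = max (|z / gcd(z,z')|, |z' / gcd(z,z')|)`. -/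
noncomputable def d (z z' : Fac α) : ℕ :=
  letI := Classical.decEq {u : α // Irreducible u}
  max (Multiset.card (z - z')) (Multiset.card (z' - z))

/-- The distance between two sets of factorizations, the minimum of pairwise
distances (with the convention `sInf ∅ = 0`). -/
noncomputable def dS (X Y : Set (Fac α)) : ℕ :=
  sInf {n : ℕ | ∃ x ∈ X, ∃ y ∈ Y, d x y = n}

/-- `k` and `l` are adjacent lengths of `a` (with `k < l`):
`L(a) ∩ [k, l] = {k, l}`. -/
def Adjacent (a : α) (k l : ℕ) : Prop :=
  k ∈ L a ∧ l ∈ L a ∧ k < l ∧ ∀ m ∈ L a, k ≤ m → m ≤ l → m = k ∨ m = l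

/-- A chain of factorizations of `a` from `z` to `z'` whose consecutive members
satisfy the step predicate `P`. -/
def Chain (a : α) (P : Fac α → Fac α → Prop) (z z' : Fac α) : Prop :=
  ∃ (n : ℕ) (c : Fin (n + 1) → Fac α),
    c 0 = z ∧ c (Fin.last n) = z' ∧ (∀ i, c i ∈ Z a) ∧
    ∀ i : Fin n, P (c i.castSucc) (c i.succ)

/-- The catenary degree of an element: the smallest `N ∈ ℕ∞` such that any two
factorizations of `a` are connected by an `N`-chain. -/
noncomputable def cat (a : α) : ℕ∞ :=
  sInf {N : ℕ∞ | ∀ z ∈ Z a, ∀ z' ∈ Z a,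
    Chain a (fun x y => (d x y : ℕ∞) ≤ N) z z'}

/-- The equal catenary degree of an element: the smallest `N ∈ ℕ∞` such that any two
factorizations of `a` of the same length are connected by an equal-length `N`-chain. -/
noncomputable def ceq (a : α) : ℕ∞ :=
  sInf {N : ℕ∞ | ∀ z ∈ Z a, ∀ z' ∈ Z a, Multiset.card z = Multiset.card z' →
    Chain a (fun x y => (d x y : ℕ∞) ≤ N ∧ Multiset.card x = Multiset.card y) z z'}

/-- The monotone catenary degree of an element: the smallest `N ∈ ℕ∞` such that any two
factorizations of `a` (ordered by length) are connected by a monotone `N`-chain. -/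
noncomputable def cmon (a : α) : ℕ∞ :=
  sInf {N : ℕ∞ | ∀ z ∈ Z a, ∀ z' ∈ Z a, Multiset.card z ≤ Multiset.card z' →
    Chain a (fun x y => (d x y : ℕ∞) ≤ N ∧ Multiset.card x ≤ Multiset.card y) z z'}

/-- The adjacent catenary degree of an element:
`c_adj(a) = sup{d(Z_k(a), Z_l(a)) : k, l ∈ L(a) adjacent}`. -/
noncomputable def cadj (a : α) : ℕ∞ :=
  sSup {r : ℕ∞ | ∃ k l : ℕ, Adjacent a k l ∧ r = (dS (Zk a k) (Zk a l) : ℕ∞)}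

noncomputable def catH (α : Type*) [CancelCommMonoid α] : ℕ∞ := ⨆ a : α, cat a
noncomputable def ceqH (α : Type*) [CancelCommMonoid α] : ℕ∞ := ⨆ a : α, ceq a
noncomputable def cmonH (α : Type*) [CancelCommMonoid α] : ℕ∞ := ⨆ a : α, cmon a
noncomputable def cadjH (α : Type*) [CancelCommMonoid α] : ℕ∞ := ⨆ a : α, cadj a

/-- `gcd(x, y) ≠ 1`: the two factorizations share an atom. -/
def RStep (x y : Fac α) : Prop := ∃ u, u ∈ x ∧ u ∈ y

/-- `z ≈ z'`: there is an `R`-chain concatenating `z` and `z'` in `Z a`. -/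
def RRel (a : α) (z z' : Fac α) : Prop := Chain a RStep z z'

/-- `z ≈_eq z'`: there is an equal-length `R`-chain concatenating `z` and `z'` in `Z a`. -/
def RRelEq (a : α) (z z' : Fac α) : Prop :=
  Chain a (fun x y => RStep x y ∧ Multiset.card x = Multiset.card y) z z'

/-- There is a monotone `R`-chain from `z` to `z'` in `Z a`. -/
def MonRChain (a : α) (z z' : Fac α) : Prop :=
  Chain a (fun x y => RStep x y ∧ Multiset.card x ≤ Multiset.card y) z z'

/-- `μ(a)`: the supremum, over the `R`-classes `ρ` of `Z a`, of the minimal length of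
an element of `ρ`. -/
noncomputable def mu (a : α) : ℕ∞ :=
  sSup {r : ℕ∞ | ∃ z ∈ Z a,
    r = ((sInf {n : ℕ | ∃ z', RRel a z z' ∧ Multiset.card z' = n} : ℕ) : ℕ∞)}

noncomputable def muH (α : Type*) [CancelCommMonoid α] : ℕ∞ := ⨆ a : α, mu a

/-- `μ_eq(a) = sup{k ∈ L(a) : Z_k(a) has more than one ≈_eq-class}`. -/
noncomputable def mueq (a : α) : ℕ∞ :=
  sSup {r : ℕ∞ | ∃ k ∈ L a,
    (∃ z ∈ Zk a k, ∃ z' ∈ Zk a k, ¬ RRelEq a z z') ∧ r = (k : ℕ∞)}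

noncomputable def mueqH (α : Type*) [CancelCommMonoid α] : ℕ∞ := ⨆ a : α, mueq a

/-- `μ_adj(a) = sup{k ∈ L(a) : d(Z_k(a), Z_l(a)) = k for the l ∈ L(a), l < k adjacent to k}`. -/
noncomputable def muadj (a : α) : ℕ∞ :=
  sSup {r : ℕ∞ | ∃ k ∈ L a,
    (∃ l : ℕ, Adjacent a l k ∧ dS (Zk a k) (Zk a l) = k) ∧ r = (k : ℕ∞)}

noncomputable def muadjH (α : Type*) [CancelCommMonoid α] : ℕ∞ := ⨆ a : α, muadj a

/-- The monoid of relations of `H`, as a subset of `Z(H) × Z(H)`. -/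
def relMon (α : Type*) [CancelCommMonoid α] : Set (Fac α × Fac α) :=
  {p | piF p.1 = piF p.2}

/-- The monoid of equal-length relations of `H`. -/
def relMonEq (α : Type*) [CancelCommMonoid α] : Set (Fac α × Fac α) :=
  {p | piF p.1 = piF p.2 ∧ Multiset.card p.1 = Multiset.card p.2}

/-- The monoid of monotone relations of `H`. -/
def relMonMon (α : Type*) [CancelCommMonoid α] : Set (Fac α × Fac α) :=
  {p | piF p.1 = piF p.2 ∧ Multiset.card p.1 ≤ Multiset.card p.2}

/-- `p` is an atom (irreducible element) of the reduced submonoid `S` of `Z(H) × Z(H)`. -/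
def IsAtomIn (S : Set (Fac α × Fac α)) (p : Fac α × Fac α) : Prop :=
  p ∈ S ∧ p ≠ 0 ∧ ∀ q ∈ S, ∀ r ∈ S, p = q + r → q = 0 ∨ r = 0

/-- `A_a(S) = A(S) ∩ (Z(a) × Z(a))`. -/
def AtomsAt (S : Set (Fac α × Fac α)) (a : α) : Set (Fac α × Fac α) :=
  {p | IsAtomIn S p ∧ p.1 ∈ Z a ∧ p.2 ∈ Z a}

/-- The tame degree `t(a, x)`. -/
noncomputable def tdeg (a : α) (x : Fac α) : ℕ∞ :=
  sInf {N : ℕ∞ | ∀ z ∈ Z a, (∃ w ∈ Z a, x ≤ w) →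
    ∃ z' ∈ Z a, x ≤ z' ∧ (d z z' : ℕ∞) ≤ N}

/-- The tame degree `t(H) = sup{t(a, u) : a ∈ H, u ∈ A(H)}`. -/
noncomputable def tH (α : Type*) [CancelCommMonoid α] : ℕ∞ :=
  ⨆ (a : α) (u : {u : α // Irreducible u}), tdeg a {u}

/-- The `m`-adjacent catenary degree of an element:
`c_{ad,m}(a) = sup{d(Z_k(a), Z_{[k-m,k)}(a)) : k ∈ L(a)}`. -/
noncomputable def cadm (m : ℕ) (a : α) : ℕ∞ :=
  sSup {r : ℕ∞ | ∃ k ∈ L a, r = (dS (Zk a k) (ZM a (Set.Ico (k - m) k)) : ℕ∞)}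

noncomputable def cadmH (α : Type*) [CancelCommMonoid α] (m : ℕ) : ℕ∞ := ⨆ a : α, cadm m a

/-- `μ_{ad,m}(a) = sup{k ∈ L(a) : d(Z_k(a), Z_{[k-m,k)}(a)) = k}`. -/
noncomputable def muadm (m : ℕ) (a : α) : ℕ∞ :=
  sSup {r : ℕ∞ | ∃ k ∈ L a, dS (Zk a k) (ZM a (Set.Ico (k - m) k)) = k ∧ r = (k : ℕ∞)}

noncomputable def muadmH (α : Type*) [CancelCommMonoid α] (m : ℕ) : ℕ∞ := ⨆ a : α, muadm m a

/-- `H` is reduced: the only unit is `1`. -/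
def Reduced (α : Type*) [CancelCommMonoid α] : Prop := ∀ a : α, IsUnit a → a = 1

/-- `H` is atomic: every element is a product of atoms. -/
def Atomic (α : Type*) [CancelCommMonoid α] : Prop := ∀ a : α, ∃ z : Fac α, piF z = a

/-- The ascending chain condition on principal ideals. -/
def ACCP (α : Type*) [CancelCommMonoid α] : Prop :=
  ∀ f : ℕ → α, (∀ n, f (n + 1) ∣ f n) → ∃ N, ∀ n, N ≤ n → f N ∣ f n

open Multiset

section Distance

variable {β : Type*}

lemma piF_add (s t : Fac α) : piF (s + t) = piF s * piF t := by
  simp [piF]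

lemma d_def [DecidableEq {u : α // Irreducible u}] (z z' : Fac α) :
    d z z' = max (card (z - z')) (card (z' - z)) := by
  unfold d
  congr <;> exact Subsingleton.elim _ _

lemma d_add_right (w w' g : Fac α) : d (w + g) (w' + g) = d w w' := by
  classical
  simp only [d_def, add_tsub_add_eq_tsub_right]

lemma d_add_left (g w w' : Fac α) : d (g + w) (g + w') = d w w' := by
  rw [add_comm g, add_comm g, d_add_right]

lemma d_le_max_card (w w' : Fac α) : d w w' ≤ max (card w) (card w') := by
  classical
  rw [d_def]
  exact max_le_max (card_le_card tsub_le_self) (card_le_card tsub_le_self)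

lemma card_sub_lt_of_mem [DecidableEq β] {s t : Multiset β} {u : β} (hs : u ∈ s) (ht : u ∈ t) :
    card (s - t) < card s := by
  refine card_lt_card (lt_of_le_of_ne tsub_le_self fun h => ?_)
  have hcount := congrArg (count u) h
  rw [count_sub] at hcount
  have := count_pos.mpr hs
  have := count_pos.mpr ht
  omega

lemma d_lt_of_rStep {w w' : Fac α} (h : RStep w w') : d w w' < max (card w) (card w') := by
  classical
  obtain ⟨u, hw, hw'⟩ := h
  rw [d_def]
  exact max_lt_max (card_sub_lt_of_mem hw hw') (card_sub_lt_of_mem hw' hw)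

lemma exists_d_eq_dS {X Y : Set (Fac α)} (hX : X.Nonempty) (hY : Y.Nonempty) :
    ∃ x ∈ X, ∃ y ∈ Y, d x y = dS X Y := by
  obtain ⟨x, hx⟩ := hX
  obtain ⟨y, hy⟩ := hY
  exact Nat.sInf_mem (s := {n | ∃ x ∈ X, ∃ y ∈ Y, d x y = n}) ⟨d x y, x, hx, y, hy, rfl⟩

lemma dS_le_d {X Y : Set (Fac α)} {x y : Fac α} (hx : x ∈ X) (hy : y ∈ Y) : dS X Y ≤ d x y :=
  Nat.sInf_le ⟨x, hx, y, hy, rfl⟩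

end Distance

section Chains

lemma exists_castSucc_eq_and_succ_eq {n : ℕ} {f : Fin (n + 1) → ℕ} {k l : ℕ} (hkl : k ≠ l)
    (h0 : f 0 = k) (hlast : f (Fin.last n) = l) (hf : ∀ i, f i = k ∨ f i = l) :
    ∃ i : Fin n, f i.castSucc = k ∧ f i.succ = l := by
  by_contra! hno
  have hall : ∀ i, f i = k := Fin.induction h0 fun i hi => (hf i.succ).resolve_right (hno i hi)
  exact hkl ((hall _).symm.trans hlast)

lemma Chain.exists_step_of_adjacent {a : α} {P : Fac α → Fac α → Prop}
    (hP : ∀ x y, P x y → card x ≤ card y) {z z' : Fac α} (hc : Chain a P z z')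
    (hadj : Adjacent a (card z) (card z')) :
    ∃ w w', P w w' ∧ w ∈ Z a ∧ w' ∈ Z a ∧ card w = card z ∧ card w' = card z' := by
  obtain ⟨n, c, hc0, hcn, hmem, hstep⟩ := hc
  obtain ⟨-, -, hlt, hbetween⟩ := hadj
  have hmono : Monotone (card ∘ c) :=
    Fin.monotone_iff_le_succ.mpr fun i => hP _ _ (hstep i)
  have hvals : ∀ i, card (c i) = card z ∨ card (c i) = card z' := fun i =>
    hbetween _ ⟨c i, hmem i, rfl⟩ (hc0 ▸ hmono (Fin.zero_le i)) (hcn ▸ hmono (Fin.le_last i))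
  obtain ⟨i, hi, hi'⟩ := exists_castSucc_eq_and_succ_eq (f := card ∘ c) hlt.ne
    (by simp [hc0]) (by simp [hcn]) hvals
  exact ⟨_, _, hstep i, hmem _, hmem _, hi, hi'⟩

end Chains

section ClosestPair

def IsClosestPair (a : α) (z z' : Fac α) : Prop :=
  z ∈ Z a ∧ z' ∈ Z a ∧ ∀ w ∈ Zk a (card z), ∀ w' ∈ Zk a (card z'), d z z' ≤ d w w'

lemma exists_isClosestPair {a : α} {k l : ℕ} (hk : k ∈ L a) (hl : l ∈ L a) :
    ∃ z z', card z = k ∧ card z' = l ∧ IsClosestPair a z z' ∧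
      d z z' = dS (Zk a k) (Zk a l) := by
  obtain ⟨w, hw, hwk⟩ := hk
  obtain ⟨w', hw', hwl⟩ := hl
  obtain ⟨z, ⟨hz, hzk⟩, z', ⟨hz', hzl⟩, hd⟩ := 
    exists_d_eq_dS (X := Zk a k) (Y := Zk a l) ⟨w, hw, hwk⟩ ⟨w', hw', hwl⟩
  refine ⟨z, z', hzk, hzl, ⟨hz, hz', ?_⟩, hd⟩
  rw [hzk, hzl, hd]
  exact fun _ hv _ hv' => dS_le_d hv hv'

lemma card_snd_pos_of_mem_relMonMon {q : Fac α × Fac α} (hq : q ∈ relMonMon α) (h0 : q ≠ 0) :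
    0 < card q.2 := by
  rw [Nat.pos_iff_ne_zero]
  intro h
  have h1 : card q.1 = 0 := by have := hq.2; omega
  exact h0 (Prod.ext (card_eq_zero.mp h1) (card_eq_zero.mp h))

variable {b : α} {x y : Fac α}

theorem IsClosestPair.isAtomIn_relMonMon (hp : IsClosestPair b x y)
    (hadj : Adjacent b (card x) (card y)) (hd : d x y = card y) :
    IsAtomIn (relMonMon α) (x, y) := by
  obtain ⟨hx, hy, hmin⟩ := hp
  have hlt := hadj.2.2.1
  refine ⟨⟨hx.trans hy.symm, hlt.le⟩, fun h => ?_, ?_⟩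
  · have : y = 0 := congrArg Prod.snd h
    simp [this] at hlt
  rintro q hq r hr hqr
  by_contra! hne
  have hq2 := card_snd_pos_of_mem_relMonMon hq hne.1
  have hr2 := card_snd_pos_of_mem_relMonMon hr hne.2
  have hq1 := hq.2
  have hr1 := hr.2
  simp only [Prod.ext_iff, Prod.fst_add, Prod.snd_add] at hqr
  obtain ⟨rfl, rfl⟩ := hqr
  have hmid : q.2 + r.1 ∈ Z b := by
    change piF _ = b
    rw [piF_add, ← hq.1, ← piF_add]
    exact hx
  simp only [card_add] at hd hlt
  rcases hadj.2.2.2 _ ⟨_, hmid, rfl⟩ (by simp only [card_add]; omega)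
    (by simp only [card_add]; omega) with h | h
  · have hle := hmin _ ⟨hmid, h⟩ _ ⟨hy, rfl⟩
    rw [d_add_left] at hle
    have := d_le_max_card r.1 r.2
    omega
  · have hle := hmin _ ⟨hx, rfl⟩ _ ⟨hmid, h⟩
    rw [d_add_right] at hle
    have := d_le_max_card q.1 q.2
    omega

theorem IsClosestPair.not_monRChain (hp : IsClosestPair b x y)
    (hadj : Adjacent b (card x) (card y)) (hd : d x y = card y) : ¬ MonRChain b x y := by
  intro hc
  obtain ⟨w, w', ⟨hstep, -⟩, hw, hw', hwx, hwy⟩ :=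
    hc.exists_step_of_adjacent (fun _ _ h => h.2) hadj
  have hle := hp.2.2 w ⟨hw, hwx⟩ w' ⟨hw', hwy⟩
  have hlt := d_lt_of_rStep hstep
  rw [hwx, hwy, max_eq_right hadj.2.2.1.le] at hlt
  omega

variable [DecidableEq {u : α // Irreducible u}] {a : α} {z z' : Fac α}

lemma card_eq_card_sub_add_card_inter (z z' : Fac α) :
    card z = card (z - z') + card (z ∩ z') := by
  rw [← card_add, sub_add_inter]

lemma piF_sub_eq_piF_sub (hz : z ∈ Z a) (hz' : z' ∈ Z a) : piF (z - z') = piF (z' - z) := by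
  refine mul_right_cancel (b := piF (z ∩ z')) ?_
  rw [← piF_add, ← piF_add, sub_add_inter, inter_comm, sub_add_inter]
  exact hz.trans hz'.symm

lemma add_inter_mem_Z (hz : z ∈ Z a) {w : Fac α} (hw : piF w = piF (z - z')) :
    w + z ∩ z' ∈ Z a := by
  change piF _ = a
  rw [piF_add, hw, ← piF_add, sub_add_inter]
  exact hz

lemma d_sub_sub (z z' : Fac α) : d (z - z') (z' - z) = d z z' := by
  rw [← d_add_right _ _ (z ∩ z'), sub_add_inter, inter_comm, sub_add_inter]

lemma d_eq_card_sub (h : card z ≤ card z') : d z z' = card (z' - z) := by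
  have := card_eq_card_sub_add_card_inter z z'
  have := card_eq_card_sub_add_card_inter z' z
  rw [inter_comm] at this
  rw [d_def, max_eq_right (by omega)]

lemma adjacent_sub (hz : z ∈ Z a) (hz' : z' ∈ Z a) (hadj : Adjacent a (card z) (card z')) :
    Adjacent (piF (z - z')) (card (z - z')) (card (z' - z)) := by
  obtain ⟨-, -, hlt, hbetween⟩ := hadj
  have hx := card_eq_card_sub_add_card_inter z z'
  have hy := card_eq_card_sub_add_card_inter z' z
  rw [inter_comm] at hy
  refine ⟨⟨_, rfl, rfl⟩, ⟨_, (piF_sub_eq_piF_sub hz hz').symm, rfl⟩, by omega, ?_⟩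
  rintro m ⟨w, hw, rfl⟩ h1 h2
  have := hbetween _ ⟨_, add_inter_mem_Z hz hw, card_add _ _⟩ (by omega) (by omega)
  omega

theorem IsClosestPair.sub (hp : IsClosestPair a z z') :
    IsClosestPair (piF (z - z')) (z - z') (z' - z) := by
  obtain ⟨hz, hz', hmin⟩ := hp
  have hpi := piF_sub_eq_piF_sub hz hz'
  refine ⟨rfl, hpi.symm, fun w hw w' hw' => ?_⟩
  have hx := card_eq_card_sub_add_card_inter z z'
  have hy := card_eq_card_sub_add_card_inter z' z
  rw [inter_comm] at hy
  rw [d_sub_sub, ← d_add_right w w' (z ∩ z')]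
  refine hmin _ ⟨add_inter_mem_Z hz hw.1, ?_⟩ _ ⟨add_inter_mem_Z hz hw'.1, ?_⟩
  · rw [card_add, hw.2, hx]
  · rw [card_add, hw'.2, hy]

end ClosestPair

theorem exists_isAtomIn_relMonMon_of_adjacent {a : α} {k l : ℕ} (hadj : Adjacent a k l) :
    ∃ p : Fac α × Fac α, IsAtomIn (relMonMon α) p ∧ card p.1 < card p.2 ∧
      Adjacent (piF p.1) (card p.1) (card p.2) ∧ ¬ MonRChain (piF p.1) p.1 p.2 ∧
      dS (Zk a k) (Zk a l) = card p.2 := by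
  classical
  obtain ⟨z, z', rfl, rfl, hp, hdS⟩ := exists_isClosestPair hadj.1 hadj.2.1
  have hadj' := adjacent_sub hp.1 hp.2.1 hadj
  have hd : d z z' = card (z' - z) := d_eq_card_sub hadj.2.2.1.le
  have hd' : d (z - z') (z' - z) = card (z' - z) := by rw [d_sub_sub, hd]
  exact ⟨(z - z', z' - z), hp.sub.isAtomIn_relMonMon hadj' hd', hadj'.2.2.1, hadj',
    hp.sub.not_monRChain hadj' hd', hdS.symm.trans hd⟩

theorem stmt13_general {α : Type*} [CancelCommMonoid α] :
    cadjH α ≤ sSup {r : ℕ∞ | ∃ p : Fac α × Fac α, IsAtomIn (relMonMon α) p ∧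
      Multiset.card p.1 < Multiset.card p.2 ∧
      Adjacent (piF p.1) (Multiset.card p.1) (Multiset.card p.2) ∧
      ¬ MonRChain (piF p.1) p.1 p.2 ∧ r = (Multiset.card p.2 : ℕ∞)} := by
  refine iSup_le fun a => sSup_le ?_
  rintro r ⟨k, l, hadj, rfl⟩
  obtain ⟨p, hatom, hlt, hadj', hchain, hd⟩ := exists_isAtomIn_relMonMon_of_adjacent hadj
  exact le_sSup ⟨p, hatom, hlt, hadj', hchain, by rw [hd]⟩

/-- Let `H` be a reduced, commutative, cancellative, atomic monoid. Then
`c_adj(H) ≤ sup{|y| : (x, y) ∈ A(∼_{H,mon}), |x| < |y|, the lengths |x| and |y| are`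
`adjacent elements of L(π(x)), and there is no monotone R-chain from x to y}`. -/
theorem stmt13 {α : Type*} [CancelCommMonoid α]
    (hred : Reduced α) (hatomic : Atomic α) :
    cadjH α ≤ sSup {r : ℕ∞ | ∃ p : Fac α × Fac α, IsAtomIn (relMonMon α) p ∧
      Multiset.card p.1 < Multiset.card p.2 ∧
      Adjacent (piF p.1) (Multiset.card p.1) (Multiset.card p.2) ∧
      ¬ MonRChain (piF p.1) p.1 p.2 ∧ r = (Multiset.card p.2 : ℕ∞)} :=
  stmt13_general

end CMR
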